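/- Let G be a finite simple Hamiltonian graph on an odd number k of vertices that is not isomorphic to the cycle C_k. Then the Cartesian product G □ K₂ is not Hamiltonian-transitive. -/

import Mathlib

open SimpleGraph

/-- `G` contains a Hamiltonian cycle. -/
def HasHamCycle {V : Type*} [DecidableEq V] (G : SimpleGraph V) : Prop :=
  ∃ (v : V) (c : G.Walk v v), c.IsHamiltonianCycle

/-- `G` is Hamiltonian-transitive: it has a Hamiltonian cycle, and any Hamiltonian cycle
can be mapped to any other by a graph automorphism (acting on edge sets). -/
def IsHamTransitive {V : Type*} [DecidableEq V] (G : SimpleGraph V) : Prop :=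
  HasHamCycle G ∧
  ∀ ⦃u v : V⦄ (c₁ : G.Walk u u) (c₂ : G.Walk v v),
    c₁.IsHamiltonianCycle → c₂.IsHamiltonianCycle →
    ∃ φ : G ≃g G, Sym2.map ⇑φ '' {e | e ∈ c₁.edges} = {e | e ∈ c₂.edges}

/-- A finite graph is prime w.r.t. the Cartesian (box) product. -/
def IsPrimeGraph {V : Type*} [Fintype V] (G : SimpleGraph V) : Prop :=
  G.Connected ∧ 2 ≤ Fintype.card V ∧
    ¬ ∃ (a b : ℕ) (A : SimpleGraph (Fin a)) (B : SimpleGraph (Fin b)),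
        2 ≤ a ∧ 2 ≤ b ∧ Nonempty (G ≃g A □ B)

/-- `F` is a Cartesian factor of `G`. -/
def IsCartFactorOf {W V : Type*} (F : SimpleGraph W) (G : SimpleGraph V) : Prop :=
  ∃ (c : ℕ) (C : SimpleGraph (Fin c)), Nonempty (G ≃g F □ C)

/-- Two graphs are relatively prime w.r.t. the Cartesian product: no graph on at least
two vertices is (isomorphic to) a Cartesian factor of both. -/
def RelPrimeGraphs {V W : Type*} (G : SimpleGraph V) (H : SimpleGraph W) : Prop :=
  ¬ ∃ (w : ℕ) (F : SimpleGraph (Fin w)), 2 ≤ w ∧ IsCartFactorOf F G ∧ IsCartFactorOf F H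

/-- The `n`-fold Cartesian (box) power of `G`. -/
def boxPower {V : Type*} (G : SimpleGraph V) (n : ℕ) : SimpleGraph (Fin n → V) where
  Adj f g := ∃ i, G.Adj (f i) (g i) ∧ ∀ j, j ≠ i → f j = g j
  symm := ⟨fun f g ⟨i, h, hj⟩ => ⟨i, h.symm, fun j hji => (hj j hji).symm⟩⟩
  loopless := ⟨fun f ⟨_, h, _⟩ => G.loopless.irrefl _ h⟩

/-- The Cartesian (box) product of a family of graphs. -/
def piBox {ι : Type*} {W : ι → Type*} (H : ∀ i, SimpleGraph (W i)) :
    SimpleGraph (∀ i, W i) where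
  Adj f g := ∃ i, (H i).Adj (f i) (g i) ∧ ∀ j, j ≠ i → f j = g j
  symm := ⟨fun f g ⟨i, h, hj⟩ => ⟨i, h.symm, fun j hji => (hj j hji).symm⟩⟩
  loopless := ⟨fun f ⟨_, h, _⟩ => (H _).loopless.irrefl _ h⟩

/-- The Hamilton compression of a (Hamiltonian) cycle `c`: the largest `k` such that `k`
divides the length of `c` and rotating `c` by `length / k` is induced by an automorphism. -/
noncomputable def cycleCompression {V : Type*} {G : SimpleGraph V} {v : V}
    (c : G.Walk v v) : ℕ :=
  sSup {k | k ∣ c.length ∧ ∃ φ : G ≃g G,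
    ∀ i : ℕ, φ (c.getVert (i % c.length)) = c.getVert ((i + c.length / k) % c.length)}

/-- The Hamilton compression of a graph: the maximum compression over its Hamiltonian
cycles. -/
noncomputable def graphCompression {V : Type*} [DecidableEq V] (G : SimpleGraph V) : ℕ :=
  sSup {k | ∃ (v : V) (c : G.Walk v v), c.IsHamiltonianCycle ∧ cycleCompression c = k}

/-- The Cayley graph of an additive group w.r.t. a connection set `S`
(intended to satisfy `0 ∉ S` and `-S = S`). -/
def cayleyGraph {Γ : Type*} [AddGroup Γ] (S : Set Γ) : SimpleGraph Γ :=
  SimpleGraph.fromRel (fun x y => y - x ∈ S)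

/-- `G` has a `K`-`l`-layer structure: the vertices split into `l` layers, each inducing a
copy of the Hamiltonian graph `K`, with consecutive layers joined by a perfect matching
inducing an isomorphism between them. -/
def HasLayerStructure {V W : Type*} [DecidableEq W] (G : SimpleGraph V)
    (K : SimpleGraph W) (l : ℕ) : Prop :=
  HasHamCycle K ∧
  ∃ (L : V → Fin l) (e : ∀ i : Fin l, {v : V // L v = i} ≃ W),
    (∀ (i : Fin l) (x y : {v : V // L v = i}), G.Adj x.val y.val ↔ K.Adj (e i x) (e i y)) ∧
    ∀ (i : ℕ) (hi : i + 1 < l) (x : {v : V // L v = ⟨i, Nat.lt_of_succ_lt hi⟩}),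
      G.Adj x.val ((e ⟨i + 1, hi⟩).symm (e ⟨i, Nat.lt_of_succ_lt hi⟩ x)).val

/-- The truncation of a (cubic) graph: vertices are the darts of `G`; two darts are
adjacent iff they share their initial vertex (triangle edges) or are reverses of each
other (original edges). -/
def truncGraph {V : Type*} (G : SimpleGraph V) : SimpleGraph G.Dart :=
  SimpleGraph.fromRel (fun d d' =>
    (d.toProd.1 = d'.toProd.1 ∧ d.toProd.2 ≠ d'.toProd.2) ∨ d'.toProd = d.toProd.swap)

/-- The set of Hamiltonian cycles of `G`, as edge sets. -/
def hamCycleSets {V : Type*} [DecidableEq V] (G : SimpleGraph V) : Set (Set (Sym2 V)) :=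
  {E | ∃ (v : V) (c : G.Walk v v), c.IsHamiltonianCycle ∧ E = {e | e ∈ c.edges}}

/-!
Let `k` be the (odd) order of `G`, and call the edges `(v, 0) (v, 1)` of `G □ K₂` rungs.

Every automorphism `φ` of `G □ K₂` maps rungs to rungs. If `φ` maps the rung at `u` to a rung,
then so it does at every neighbour `w` of `u`, by looking at the image of the square
`(u, 0) (u, 1) (w, 1) (w, 0)`; as `G` is connected it remains to find one such `u`. Otherwise
every rung is mapped into a single layer `G × {b}`, so the preimage of the layer `G × {0}`
would be a union of rungs and have even size, while it has `k` elements.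

Hence Hamiltonian cycles in the same orbit use the same number of rungs. Going once around a
Hamiltonian cycle of `G` in one layer and back in the other gives a Hamiltonian cycle with two
rungs. Since `G` is not a cycle, it has a chord, and using it a zigzag produces a Hamiltonian
cycle with at least three rungs.
-/

theorem List.nodup_of_forall_mem_of_length_eq_card {α : Type*} [Fintype α] {l : List α}
    (hmem : ∀ a, a ∈ l) (hl : l.length = Fintype.card α) : l.Nodup := by
  classical
  have huniv : l.toFinset = Finset.univ :=
    Finset.eq_univ_of_forall fun a => List.mem_toFinset.2 (hmem a)
  rw [← List.dedup_eq_self, ← (List.dedup_sublist l).length_eq, ← List.card_toFinset, huniv,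
    Finset.card_univ, hl]

namespace SimpleGraph

variable {V : Type*} {G : SimpleGraph V}

theorem Walk.exists_isHamiltonianCycle_of_seq [Fintype V] [DecidableEq V] (F : ℕ → V) {n : ℕ}
    (hn : 3 ≤ n) (hcard : Fintype.card V = n) (hadj : ∀ i < n, G.Adj (F i) (F (i + 1)))
    (hcl : F n = F 0) (hsurj : ∀ v, ∃ i < n, F i = v) :
    ∃ c : G.Walk (F 0) (F 0), c.IsHamiltonianCycle ∧
      ∀ u v, s(u, v) ∈ c.edges ↔ ∃ i < n, s(F i, F (i + 1)) = s(u, v) := by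
  set l := (List.range (n + 1)).map F
  have hne : l ≠ [] := by simp [l]
  have hchain : l.IsChain G.Adj := (List.isChain_map F).2 ((List.isChain_range_succ _ n).2 hadj)
  have hhead : l.head hne = F 0 := by simp [l]
  have hlast : l.getLast hne = F 0 := by simp [l, hcl]
  set c := (Walk.ofSupport l hne hchain).copy hhead hlast
  have hlen : c.length = n := by simp [c, l]
  have hget : ∀ i ≤ n, c.getVert i = F i := fun i hi => by
    rw [c.getVert_eq_support_getElem (by omega)]
    simp [c, l]
  have htail : c.tail.support = (List.range n).map (fun i => F (i + 1)) := by
    rw [c.support_tail_of_not_nil (by rw [← Walk.length_eq_zero_iff]; omega)]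
    simp [c, l, List.range_succ_eq_map]
  have hpath : c.tail.IsPath := by
    rw [Walk.isPath_def, htail]
    refine List.nodup_of_forall_mem_of_length_eq_card (fun v => ?_) (by simp [hcard])
    obtain ⟨i, hi, rfl⟩ := hsurj v
    rcases i with _ | i
    · exact List.mem_map.2 ⟨n - 1, by simp; omega, by rw [Nat.sub_add_cancel (by omega), hcl]⟩
    · exact List.mem_map.2 ⟨i, by simp; omega, rfl⟩
  have hcycle : c.IsCycle := Walk.isCycle_iff_isPath_tail_and_le_length.2 ⟨hpath, hlen ▸ hn⟩
  refine ⟨c, Walk.isHamiltonianCycle_iff_isCycle_and_length_eq.2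
    ⟨hcycle, hlen.trans hcard.symm⟩, ?_⟩
  intro u v
  rw [Walk.mk_mem_edges_iff_exists, hlen]
  exact exists_congr fun i => and_congr_right fun hi => by rw [hget i hi.le, hget (i + 1) hi]

/-- `f` runs once around a Hamiltonian cycle of `G`. -/
structure IsCyclicEnum (G : SimpleGraph V) {n : ℕ} (f : ZMod n → V) : Prop where
  bijective : Function.Bijective f
  adj : ∀ i, G.Adj (f i) (f (i + 1))

theorem Walk.IsHamiltonianCycle.exists_isCyclicEnum [Fintype V] [DecidableEq V] {a : V}
    {c : G.Walk a a} (hc : c.IsHamiltonianCycle) :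
    ∃ f : ZMod (Fintype.card V) → V, G.IsCyclicEnum f := by
  have h3 := hc.isCycle.three_le_length
  rw [← hc.length_eq]
  have : NeZero c.length := ⟨by omega⟩
  refine ⟨fun i => c.getVert i.val, ?_, fun i => ?_⟩
  · rw [Fintype.bijective_iff_injective_and_card, ZMod.card]
    refine ⟨fun i j h => ZMod.val_injective _ (hc.isCycle.getVert_injOn' ?_ ?_ h),
      hc.length_eq⟩ <;>
      simp only [Set.mem_ofPred_eq] <;> have := ZMod.val_lt i <;> have := ZMod.val_lt j <;> omega
  · have hsucc : (i + 1).val = (i.val + 1) % c.length := by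
      rw [ZMod.val_add, ZMod.val_one_eq_one_mod, Nat.add_mod_mod]
    have hi := ZMod.val_lt i
    have hadj := c.adj_getVert_succ hi
    rcases (Nat.add_one_le_of_lt hi).lt_or_eq with h | h
    · rwa [hsucc, Nat.mod_eq_of_lt h]
    · rw [hsucc, h, Nat.mod_self, c.getVert_zero]
      rwa [h, c.getVert_length] at hadj

namespace IsCyclicEnum

variable {n : ℕ} {f : ZMod n → V}

theorem comp_add (hf : G.IsCyclicEnum f) (x : ZMod n) : G.IsCyclicEnum fun i => f (x + i) :=
  ⟨hf.bijective.comp (Equiv.addLeft x).bijective, fun i => by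
    simpa [add_assoc] using hf.adj (x + i)⟩

theorem comp_sub (hf : G.IsCyclicEnum f) (x : ZMod n) : G.IsCyclicEnum fun i => f (x - i) :=
  ⟨hf.bijective.comp (Equiv.subLeft x).bijective, fun i => by
    simpa [sub_add_cancel, sub_add_eq_sub_sub] using (hf.adj (x - i - 1)).symm⟩

theorem one_lt [NeZero n] (hf : G.IsCyclicEnum f) : 1 < n := by
  by_contra h
  obtain rfl : n = 1 := by have := NeZero.ne n; omega
  have h0 := hf.adj 0
  rw [Subsingleton.elim (0 + 1 : ZMod 1) 0] at h0
  exact G.irrefl h0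

theorem card_eq [Fintype V] [NeZero n] (hf : G.IsCyclicEnum f) : Fintype.card V = n :=
  (Fintype.card_congr (Equiv.ofBijective f hf.bijective)).symm.trans (ZMod.card n)

theorem adj_natCast (hf : G.IsCyclicEnum f) (i : ℕ) : G.Adj (f i) (f (i + 1 : ℕ)) := by
  simpa using hf.adj i

theorem exists_natCast_eq [NeZero n] (hf : G.IsCyclicEnum f) (v : V) : ∃ i < n, f i = v :=
  let ⟨x, hx⟩ := hf.bijective.2 v
  ⟨x.val, x.val_lt, by rwa [ZMod.natCast_zmod_val]⟩

theorem natCast_injOn (hf : G.IsCyclicEnum f) : Set.InjOn (fun i : ℕ => f i) (Set.Iio n) :=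
  fun a ha b hb h => by
    simpa [ZMod.val_cast_of_lt ha, ZMod.val_cast_of_lt hb] using
      congrArg ZMod.val (hf.bijective.1 h)

theorem exists_chord [NeZero n] (hf : G.IsCyclicEnum f) (hG : ¬Nonempty (G ≃g cycleGraph n)) :
    ∃ x y, G.Adj (f x) (f y) ∧ y ≠ x + 1 ∧ x ≠ y + 1 := by
  by_contra! hchord
  have hn := hf.one_lt
  set φ := ZMod.finEquiv n
  have hsucc : ∀ a b : Fin n, (a - b).val = 1 ↔ φ a = φ b + 1 := fun a b => by
    rw [← map_one φ, ← map_add, φ.injective.eq_iff, ← sub_eq_iff_eq_add', Fin.ext_iff,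
      Fin.val_one', Nat.mod_eq_of_lt hn]
  refine hG ⟨(RelIso.symm ⟨(φ : Fin n ≃ ZMod n).trans (Equiv.ofBijective f hf.bijective),
    fun {a b} => ?_⟩)⟩
  simp only [Equiv.trans_apply, Equiv.ofBijective_apply, RingEquiv.coe_toEquiv, cycleGraph_adj',
    hsucc]
  refine ⟨fun h => ?_, ?_⟩
  · by_cases hb : φ b = φ a + 1
    · exact Or.inr hb
    · exact Or.inl (hchord _ _ h hb)
  · rintro (h | h) <;> rw [h]
    exacts [(hf.adj _).symm, hf.adj _]

theorem exists_even_chord [NeZero n] (hn : Odd n) (hf : G.IsCyclicEnum f) {x y : ZMod n}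
    (hxy : G.Adj (f x) (f y)) (hy : y ≠ x + 1) (hx : x ≠ y + 1) :
    ∃ g : ZMod n → V, G.IsCyclicEnum g ∧
      ∃ j : ℕ, Even j ∧ 2 ≤ j ∧ j + 2 ≤ n ∧ G.Adj (g 0) (g j) := by
  have h1 := hf.one_lt
  have hd0 : y - x ≠ 0 := fun h => G.ne_of_adj hxy (by rw [sub_eq_zero.1 h])
  have hd1 : (y - x).val ≠ 1 := fun h => hy (sub_eq_iff_eq_add'.1 ((ZMod.val_eq_one h1 _).1 h))
  have hd1' : (x - y).val ≠ 1 := fun h => hx (sub_eq_iff_eq_add'.1 ((ZMod.val_eq_one h1 _).1 h))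
  have hneg : (x - y).val = n - (y - x).val := by rw [← neg_sub, ZMod.neg_val, if_neg hd0]
  have hpos : (y - x).val ≠ 0 := by rwa [ne_eq, ZMod.val_eq_zero]
  have hlt := ZMod.val_lt (y - x)
  -- the steps `y - x` and `x - y` add up to the odd `n`: reflect the cycle if the first is odd
  rcases Nat.even_or_odd (y - x).val with he | ho
  · exact ⟨_, hf.comp_add x, (y - x).val, he, by omega, by omega, by simpa using hxy⟩
  · exact ⟨_, hf.comp_sub x, (x - y).val, hneg ▸ Nat.Odd.sub_odd hn ho, by omega, by omega,
      by simpa using hxy⟩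

end IsCyclicEnum

def rung (v : V) : Sym2 (V × Fin 2) := s((v, 0), (v, 1))

theorem rung_injective : Function.Injective (rung : V → Sym2 (V × Fin 2)) := fun v w h => by
  simpa [rung] using congrArg (Sym2.map Prod.fst) h

theorem mk_eq_rung_iff {a a' v : V} {b b' : Fin 2} :
    s((a, b), (a', b')) = rung v ↔ a = v ∧ a' = v ∧ b ≠ b' := by
  rw [rung, Sym2.eq_iff]
  fin_cases b <;> fin_cases b' <;> simp [and_comm]

namespace Iso

variable (φ : (G □ completeGraph (Fin 2)) ≃g (G □ completeGraph (Fin 2)))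

theorem adj_apply_zero_apply_one (u : V) :
    (G □ completeGraph (Fin 2)).Adj (φ (u, 0)) (φ (u, 1)) :=
  φ.map_adj_iff.2 (boxProd_adj_right.2 (by simp))

theorem snd_apply_ne_of_fst_apply_eq {u : V} (hu : (φ (u, 0)).1 = (φ (u, 1)).1) :
    (φ (u, 0)).2 ≠ (φ (u, 1)).2 := fun h => by
  simpa using φ.injective (Prod.ext hu h)

theorem fst_apply_eq_of_adj {u w : V} (huw : G.Adj u w) (hu : (φ (u, 0)).1 = (φ (u, 1)).1) :
    (φ (w, 0)).1 = (φ (w, 1)).1 := by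
  have hu₂ := snd_apply_ne_of_fst_apply_eq φ hu
  have hcol : ∀ b, (φ (u, b)).1 = (φ (u, 0)).1 := by
    intro b; fin_cases b
    exacts [rfl, hu.symm]
  by_contra hw
  have hw₂ : ∀ b, (φ (w, b)).2 = (φ (w, 0)).2 := by
    rcases boxProd_adj.1 (adj_apply_zero_apply_one φ w) with ⟨-, h⟩ | ⟨-, h⟩
    · intro b; fin_cases b
      exacts [rfl, h.symm]
    · exact absurd h hw
  have hhor : ∀ c, (G □ completeGraph (Fin 2)).Adj (φ (u, c)) (φ (w, c)) := fun c =>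
    φ.map_adj_iff.2 (boxProd_adj_left.2 huw)
  -- Both `φ (w, _)` lie in one layer. If `φ (u, c')` does not, its neighbour `φ (w, c')` is
  -- the vertex of that layer in the column of `φ (u, _)`, which is `φ (u, c)`.
  have key : ∀ c c', (φ (u, c)).2 = (φ (w, 0)).2 → (φ (u, c')).2 ≠ (φ (w, 0)).2 →
      False := by
    intro c c' hc hc'
    rcases boxProd_adj.1 (hhor c') with ⟨-, h⟩ | ⟨-, h⟩
    · exact hc' (h.trans (hw₂ c'))
    · have : φ (w, c') = φ (u, c) :=
        Prod.ext (by rw [← h, hcol c', hcol c]) (by rw [hw₂, hc])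
      exact G.ne_of_adj huw (congrArg Prod.fst (φ.injective this)).symm
  by_cases h0 : (φ (u, 0)).2 = (φ (w, 0)).2
  · exact key 0 1 h0 (h0 ▸ hu₂.symm)
  · exact key 1 0 (by omega) h0

theorem exists_fst_apply_eq [Fintype V] (hodd : Odd (Fintype.card V)) :
    ∃ u, (φ (u, 0)).1 = (φ (u, 1)).1 := by
  by_contra! h
  have hlayer : ∀ u, (φ (u, 1)).2 = (φ (u, 0)).2 := fun u => by
    rcases boxProd_adj.1 (adj_apply_zero_apply_one φ u) with ⟨-, h'⟩ | ⟨-, h'⟩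
    exacts [h'.symm, absurd h' (h u)]
  have hcount := Fintype.sum_equiv φ.toEquiv (fun x => if (φ x).2 = 0 then 1 else 0)
    (fun y => if y.2 = 0 then 1 else 0) (fun _ => rfl)
  simp only [Fintype.sum_prod_type, Fin.sum_univ_two, hlayer, Fin.isValue, ↓reduceIte,
    one_ne_zero, add_zero, Finset.sum_const, Finset.card_univ, smul_eq_mul, mul_one] at hcount
  exact Nat.not_even_iff_odd.2 hodd ⟨_, hcount.symm.trans Finset.sum_add_distrib⟩

theorem exists_map_rung_eq [Fintype V] (hG : G.Connected) (hodd : Odd (Fintype.card V)) (u : V) :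
    ∃ v, Sym2.map φ (rung u) = rung v := by
  have hall : ∀ u, (φ (u, 0)).1 = (φ (u, 1)).1 := by
    obtain ⟨u₀, hu₀⟩ := exists_fst_apply_eq φ hodd
    intro u
    obtain ⟨p⟩ := hG.preconnected u₀ u
    induction p with
    | nil => exact hu₀
    | cons h _ ih => exact ih (fst_apply_eq_of_adj φ h hu₀)
  have hne := snd_apply_ne_of_fst_apply_eq φ (hall u)
  have hcol := hall u
  refine ⟨(φ (u, 0)).1, ?_⟩
  rw [rung, Sym2.map_mk, rung]
  generalize φ (u, 0) = p, φ (u, 1) = q at hne hcol ⊢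
  obtain ⟨v, b⟩ := p
  obtain ⟨v', b'⟩ := q
  simp only at hne hcol ⊢
  subst hcol
  fin_cases b <;> fin_cases b' <;> simp_all [Sym2.eq_swap]

theorem ncard_rungs_image_le [Fintype V] (hG : G.Connected) (hodd : Odd (Fintype.card V))
    (E : Set (Sym2 (V × Fin 2))) :
    {v | rung v ∈ Sym2.map φ '' E}.ncard ≤ {v | rung v ∈ E}.ncard := by
  choose ψ hψ using exists_map_rung_eq φ.symm hG hodd
  refine Set.ncard_le_ncard_of_injOn ψ (fun v hv => ?_) (fun v _ v' _ h => ?_)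
  · obtain ⟨e, he, hev⟩ := hv
    rw [Set.mem_ofPred_eq, ← hψ, ← hev, Sym2.map_map]
    simpa using he
  · exact rung_injective (Sym2.map.injective φ.symm.injective (by rw [hψ, hψ, h]))

end Iso

section Sequences

variable {w : ℕ → V} {n j : ℕ}

def prismSeq (n : ℕ) (w : ℕ → V) (i : ℕ) : V × Fin 2 :=
  if i < n then (w i, 0) else if i < 2 * n then (w (2 * n - 1 - i), 1) else (w (i - 2 * n), 0)

theorem prismSeq_of_lt {i : ℕ} (hi : i < n) : prismSeq n w i = (w i, 0) := if_pos hi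

theorem prismSeq_of_le_of_lt {i : ℕ} (hi : n ≤ i) (hi' : i < 2 * n) :
    prismSeq n w i = (w (2 * n - 1 - i), 1) := by
  simp only [prismSeq, if_neg (show ¬i < n by omega), if_pos hi']

theorem prismSeq_two_mul : prismSeq n w (2 * n) = (w 0, 0) := by
  rw [prismSeq, if_neg (by omega), if_neg (by omega), Nat.sub_self]

theorem prismSeq_adj (hw : ∀ i, G.Adj (w i) (w (i + 1))) {i : ℕ} (hi : i < 2 * n) :
    (G □ completeGraph (Fin 2)).Adj (prismSeq n w i) (prismSeq n w (i + 1)) := by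
  rcases (by omega : i + 1 < n ∨ i + 1 = n ∨ (n ≤ i ∧ i + 1 < 2 * n) ∨ i + 1 = 2 * n) with
    h | h | h | h
  · rw [prismSeq_of_lt (by omega), prismSeq_of_lt h]
    exact boxProd_adj_left.2 (hw i)
  · rw [prismSeq_of_lt (by omega), prismSeq_of_le_of_lt (by omega) (by omega),
      show 2 * n - 1 - (i + 1) = i by omega]
    exact boxProd_adj_right.2 (by simp)
  · rw [prismSeq_of_le_of_lt h.1 (by omega), prismSeq_of_le_of_lt (by omega) h.2,
      show 2 * n - 1 - i = 2 * n - 1 - (i + 1) + 1 by omega]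
    exact boxProd_adj_left.2 (hw _).symm
  · rw [prismSeq_of_le_of_lt (by omega) (by omega), h, prismSeq_two_mul,
      show 2 * n - 1 - i = 0 by omega]
    exact boxProd_adj_right.2 (by simp)

theorem exists_prismSeq_eq (hw : ∀ v, ∃ k < n, w k = v) (p : V × Fin 2) :
    ∃ i < 2 * n, prismSeq n w i = p := by
  obtain ⟨v, b⟩ := p
  obtain ⟨k, hk, rfl⟩ := hw v
  fin_cases b
  · exact ⟨k, by omega, prismSeq_of_lt hk⟩
  · refine ⟨2 * n - 1 - k, by omega, ?_⟩
    rw [prismSeq_of_le_of_lt (by omega) (by omega), show 2 * n - 1 - (2 * n - 1 - k) = k by omega]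
    rfl

theorem eq_of_mk_prismSeq_eq_rung {i : ℕ} (hi : i < 2 * n) {v : V}
    (h : s(prismSeq n w i, prismSeq n w (i + 1)) = rung v) : v = w (n - 1) ∨ v = w 0 := by
  rcases (by omega : i + 1 < n ∨ i + 1 = n ∨ (n ≤ i ∧ i + 1 < 2 * n) ∨ i + 1 = 2 * n) with
    h' | h' | h' | h'
  · rw [prismSeq_of_lt (by omega), prismSeq_of_lt h', mk_eq_rung_iff] at h
    exact (h.2.2 rfl).elim
  · rw [prismSeq_of_lt (by omega), mk_eq_rung_iff] at h
    exact Or.inl (by rw [← h.1, show i = n - 1 by omega])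
  · rw [prismSeq_of_le_of_lt h'.1 (by omega), prismSeq_of_le_of_lt (by omega) h'.2,
      mk_eq_rung_iff] at h
    exact (h.2.2 rfl).elim
  · rw [h', prismSeq_two_mul, mk_eq_rung_iff] at h
    exact Or.inr h.2.1.symm

-- Out along `G × {0}` to `w (j - 1)`, back along `G × {1}` to `w 0`, across the chord
-- `w 0 w j`, then a zigzag: column `w k`, `k ≥ j`, is visited at steps `2 k` and `2 k + 1`,
-- switching layers in between.
def zigzagSeq (j : ℕ) (w : ℕ → V) (i : ℕ) : V × Fin 2 :=
  if i < j then (w i, 0) else if i < 2 * j then (w (2 * j - 1 - i), 1)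
  else (w (i / 2), if (i + 1) / 2 % 2 = 0 then 1 else 0)

theorem zigzagSeq_of_lt {i : ℕ} (hi : i < j) : zigzagSeq j w i = (w i, 0) := if_pos hi

theorem zigzagSeq_of_le_of_lt {i : ℕ} (hi : j ≤ i) (hi' : i < 2 * j) :
    zigzagSeq j w i = (w (2 * j - 1 - i), 1) := by
  simp only [zigzagSeq, if_neg (show ¬i < j by omega), if_pos hi']

theorem zigzagSeq_of_le {i : ℕ} (hi : 2 * j ≤ i) :
    zigzagSeq j w i = (w (i / 2), if (i + 1) / 2 % 2 = 0 then 1 else 0) := by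
  simp only [zigzagSeq, if_neg (show ¬i < j by omega), if_neg (show ¬i < 2 * j by omega)]

theorem zigzagSeq_adj (hw : ∀ i, G.Adj (w i) (w (i + 1))) (hj : Even j)
    (hchord : G.Adj (w 0) (w j)) (i : ℕ) :
    (G □ completeGraph (Fin 2)).Adj (zigzagSeq j w i) (zigzagSeq j w (i + 1)) := by
  rw [Nat.even_iff] at hj
  rcases (by omega : i + 1 < j ∨ i + 1 = j ∨ (j ≤ i ∧ i + 1 < 2 * j) ∨ i + 1 = 2 * j ∨
    (2 * j ≤ i ∧ i % 2 = 0) ∨ (2 * j ≤ i ∧ i % 2 = 1)) with h | h | h | h | h | h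
  · rw [zigzagSeq_of_lt (by omega), zigzagSeq_of_lt h]
    exact boxProd_adj_left.2 (hw i)
  · rw [zigzagSeq_of_lt (by omega), zigzagSeq_of_le_of_lt (by omega) (by omega),
      show 2 * j - 1 - (i + 1) = i by omega]
    exact boxProd_adj_right.2 (by simp)
  · rw [zigzagSeq_of_le_of_lt h.1 (by omega), zigzagSeq_of_le_of_lt (by omega) h.2,
      show 2 * j - 1 - i = 2 * j - 1 - (i + 1) + 1 by omega]
    exact boxProd_adj_left.2 (hw _).symm
  · rw [zigzagSeq_of_le_of_lt (by omega) (by omega), zigzagSeq_of_le (by omega),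
      show 2 * j - 1 - i = 0 by omega, show (i + 1) / 2 = j by omega,
      if_pos (show (i + 1 + 1) / 2 % 2 = 0 by omega)]
    exact boxProd_adj_left.2 hchord
  · rw [zigzagSeq_of_le h.1, zigzagSeq_of_le (by omega), show (i + 1) / 2 = i / 2 by omega]
    refine boxProd_adj_right.2 ?_
    split_ifs <;> first | omega | simp
  · rw [zigzagSeq_of_le h.1, zigzagSeq_of_le (by omega), show (i + 1) / 2 = i / 2 + 1 by omega,
      show (i + 1 + 1) / 2 = i / 2 + 1 by omega]
    exact boxProd_adj_left.2 (hw _)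

theorem zigzagSeq_two_mul {k : ℕ} (hk : j ≤ k) :
    zigzagSeq j w (2 * k) = (w k, if k % 2 = 0 then 1 else 0) ∧
      zigzagSeq j w (2 * k + 1) = (w k, if (k + 1) % 2 = 0 then 1 else 0) := by
  rw [zigzagSeq_of_le (by omega), zigzagSeq_of_le (by omega), show 2 * k / 2 = k by omega,
    show (2 * k + 1) / 2 = k by omega, show (2 * k + 1 + 1) / 2 = k + 1 by omega]
  exact ⟨rfl, rfl⟩

theorem exists_zigzagSeq_eq (hw : ∀ v, ∃ k < n, w k = v) (hjn : j ≤ n) (p : V × Fin 2) :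
    ∃ i < 2 * n, zigzagSeq j w i = p := by
  obtain ⟨v, b⟩ := p
  obtain ⟨k, hk, rfl⟩ := hw v
  by_cases hkj : k < j
  · fin_cases b
    · exact ⟨k, by omega, zigzagSeq_of_lt hkj⟩
    · refine ⟨2 * j - 1 - k, by omega, ?_⟩
      rw [zigzagSeq_of_le_of_lt (by omega) (by omega),
        show 2 * j - 1 - (2 * j - 1 - k) = k by omega]
      rfl
  · have hlayer : (if k % 2 = 0 then 1 else 0) = b ∨ (if (k + 1) % 2 = 0 then 1 else 0) = b := by
      split_ifs <;> omega
    rcases hlayer with h | h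
    · exact ⟨2 * k, by omega, by rw [(zigzagSeq_two_mul (by omega)).1, h]⟩
    · exact ⟨2 * k + 1, by omega, by rw [(zigzagSeq_two_mul (by omega)).2, h]⟩

theorem zigzagSeq_two_mul_eq_zero (hn : Odd n) (hjn : j ≤ n) (hj₀ : j ≠ 0) (hwn : w n = w 0) :
    zigzagSeq j w (2 * n) = zigzagSeq j w 0 := by
  -- as `n` is odd, the zigzag reaches column `w n = w 0` in layer `0`
  rw [Nat.odd_iff] at hn
  rw [(zigzagSeq_two_mul hjn).1, zigzagSeq_of_lt (by omega), hwn, if_neg (by omega)]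

theorem mk_zigzagSeq_two_mul_eq_rung {k : ℕ} (hk : j ≤ k) :
    s(zigzagSeq j w (2 * k), zigzagSeq j w (2 * k + 1)) = rung (w k) := by
  rw [(zigzagSeq_two_mul hk).1, (zigzagSeq_two_mul hk).2]
  exact mk_eq_rung_iff.2 ⟨rfl, rfl, by split_ifs <;> omega⟩

theorem mk_zigzagSeq_pred_eq_rung (hj₀ : j ≠ 0) :
    s(zigzagSeq j w (j - 1), zigzagSeq j w (j - 1 + 1)) = rung (w (j - 1)) := by
  rw [zigzagSeq_of_lt (by omega), zigzagSeq_of_le_of_lt (by omega) (by omega)]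
  exact mk_eq_rung_iff.2 ⟨rfl, congrArg w (by omega), by decide⟩

end Sequences

namespace IsCyclicEnum

variable {n : ℕ} {f : ZMod n → V}

theorem exists_isHamiltonianCycle_ncard_rungs_le_two [Fintype V] [DecidableEq V] [NeZero n]
    (hf : G.IsCyclicEnum f) :
    ∃ (z : V × Fin 2) (c : (G □ completeGraph (Fin 2)).Walk z z), c.IsHamiltonianCycle ∧
      {v | rung v ∈ c.edges}.ncard ≤ 2 := by
  have hn := hf.one_lt
  obtain ⟨c, hc, hedges⟩ :=
    Walk.exists_isHamiltonianCycle_of_seq (prismSeq n fun i : ℕ => f i) (by omega)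
      (by simp [hf.card_eq, mul_comm]) (fun _ => prismSeq_adj hf.adj_natCast)
      (by rw [prismSeq_two_mul, prismSeq_of_lt (by omega)])
      (exists_prismSeq_eq hf.exists_natCast_eq)
  have hsub : {v | rung v ∈ c.edges} ⊆ {f (n - 1 : ℕ), f (0 : ℕ)} := fun v hv => by
    obtain ⟨i, hi, he⟩ := (hedges (v, 0) (v, 1)).1 hv
    exact eq_of_mk_prismSeq_eq_rung hi he
  exact ⟨_, c, hc, (Set.ncard_le_ncard hsub).trans ((Set.ncard_insert_le _ _).trans (by simp))⟩

theorem exists_isHamiltonianCycle_three_le_ncard_rungs [Fintype V] [DecidableEq V] [NeZero n]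
    (hf : G.IsCyclicEnum f) (hn : Odd n) {j : ℕ} (hj : Even j) (hj₂ : 2 ≤ j)
    (hjn : j + 2 ≤ n) (hchord : G.Adj (f 0) (f j)) :
    ∃ (z : V × Fin 2) (c : (G □ completeGraph (Fin 2)).Walk z z), c.IsHamiltonianCycle ∧
      3 ≤ {v | rung v ∈ c.edges}.ncard := by
  set w : ℕ → V := fun i => f i
  obtain ⟨c, hc, hedges⟩ := Walk.exists_isHamiltonianCycle_of_seq (zigzagSeq j w) (by omega)
    (by simp [hf.card_eq, mul_comm])
    (fun i _ => zigzagSeq_adj hf.adj_natCast hj (by simpa [w] using hchord) i)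
    (zigzagSeq_two_mul_eq_zero hn (by omega) (by omega) (by simp [w]))
    (exists_zigzagSeq_eq hf.exists_natCast_eq (by omega))
  have hmem : ∀ i < 2 * n, ∀ v, s(zigzagSeq j w i, zigzagSeq j w (i + 1)) = rung v →
      v ∈ {v | rung v ∈ c.edges} := fun i hi v h => (hedges _ _).2 ⟨i, hi, h⟩
  have hsub : {w (j - 1), w j, w (j + 1)} ⊆ {v | rung v ∈ c.edges} := by
    rintro v (rfl | rfl | rfl)
    exacts [hmem _ (by omega) _ (mk_zigzagSeq_pred_eq_rung (by omega)),
      hmem _ (by omega) _ (mk_zigzagSeq_two_mul_eq_rung le_rfl),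
      hmem _ (by omega) _ (mk_zigzagSeq_two_mul_eq_rung (by omega))]
  have hne : ∀ a < n, ∀ b < n, a ≠ b → w a ≠ w b := fun a ha b hb hab h =>
    hab (hf.natCast_injOn ha hb h)
  refine ⟨_, c, hc, le_of_eq_of_le ?_ (Set.ncard_le_ncard hsub)⟩
  exact (Set.ncard_eq_three.2 ⟨_, _, _, hne _ (by omega) _ (by omega) (by omega),
    hne _ (by omega) _ (by omega) (by omega), hne _ (by omega) _ (by omega) (by omega), rfl⟩).symm

end IsCyclicEnum

end SimpleGraph

/-- If `G` is a finite simple Hamiltonian graph on an odd number `k` of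
vertices that is not (isomorphic to) the cycle `C_k`, then `G □ K₂` is not
Hamiltonian-transitive. -/
theorem boxProd_K2_not_hamTransitive_of_odd_noncycle
    {V : Type*} [Fintype V] [DecidableEq V] (G : SimpleGraph V) (hG : HasHamCycle G)
    (hodd : Odd (Fintype.card V))
    (hnc : ¬ Nonempty (G ≃g cycleGraph (Fintype.card V))) :
    ¬ IsHamTransitive (G □ completeGraph (Fin 2)) := by
  rintro ⟨-, htrans⟩
  obtain ⟨a, c, hc⟩ := hG
  have : Nonempty V := ⟨a⟩
  have : NeZero (Fintype.card V) := ⟨Fintype.card_ne_zero⟩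
  have hconn : G.Connected := IsHamiltonian.connected fun _ => ⟨a, c, hc⟩
  obtain ⟨f, hf⟩ := hc.exists_isCyclicEnum
  obtain ⟨x, y, hxy, hy, hx⟩ := hf.exists_chord hnc
  obtain ⟨g, hg, j, hj, hj₂, hjn, hchord⟩ := hf.exists_even_chord hodd hxy hy hx
  obtain ⟨_, c₁, hc₁, h₁⟩ := hg.exists_isHamiltonianCycle_ncard_rungs_le_two
  obtain ⟨_, c₂, hc₂, h₂⟩ :=
    hg.exists_isHamiltonianCycle_three_le_ncard_rungs hodd hj hj₂ hjn hchord
  obtain ⟨φ, hφ⟩ := htrans c₁ c₂ hc₁ hc₂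
  have h := φ.ncard_rungs_image_le hconn hodd {e | e ∈ c₁.edges}
  rw [hφ] at h
  simp only [Set.mem_ofPred_eq] at h
  omega
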